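/- Let U be a unitary on ℂ^{d₁} ⊗ ℂ^{d₂}, V a unitary on ℂ^{d₁}, and γ a unit vector in ℂ^{d₂}, such that Tr₂(U (ρ ⊗ |γ⟩⟨γ|) U†) = V ρ V† for every quantum state ρ on ℂ^{d₁}. Then there exists a unit vector γ' ∈ ℂ^{d₂}, independent of ρ, such that Tr₁(U (ρ ⊗ |γ⟩⟨γ|) U†) = |γ'⟩⟨γ'| for every quantum state ρ on ℂ^{d₁}. -/

import Mathlib

open Matrix Complex
open scoped Kronecker Classical ComplexOrder

noncomputable section

/-- A matrix is *incoherent* (w.r.t. the computational basis) if it has the form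
`Σ_x e^{iθ_x} |π(x)⟩⟨x|` for a permutation `π` and real phases `θ`. -/
def IsIncoherent {d : Type*} [Fintype d] [DecidableEq d] (U : Matrix d d ℂ) : Prop :=
  ∃ (π : Equiv.Perm d) (θ : d → ℝ),
    U = Matrix.of fun i j => if i = π j then Complex.exp ((θ j : ℂ) * Complex.I) else 0

/-- The dephasing map `Δ`, zeroing all off-diagonal entries. -/
def dephase {d : Type*} [DecidableEq d] (ρ : Matrix d d ℂ) : Matrix d d ℂ :=
  Matrix.of fun i j => if i = j then ρ i j else 0

/-- Partial trace over the second tensor factor. -/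
def ptrace2 {α β : Type*} [Fintype β] (A : Matrix (α × β) (α × β) ℂ) : Matrix α α ℂ :=
  Matrix.of fun i i' => ∑ j, A (i, j) (i', j)

/-- Partial trace over the first tensor factor. -/
def ptrace1 {α β : Type*} [Fintype α] (A : Matrix (α × β) (α × β) ℂ) : Matrix β β ℂ :=
  Matrix.of fun j j' => ∑ i, A (i, j) (i, j')

/-- A quantum state: positive semidefinite matrix of trace one. -/
def IsState {d : Type*} [Fintype d] (ρ : Matrix d d ℂ) : Prop :=
  ρ.PosSemidef ∧ ρ.trace = 1

/-- The Choi matrix of a linear map between matrix algebras. -/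
def choiMatrix {a b : Type*} [Fintype a] [DecidableEq a] [Fintype b]
    (E : Matrix a a ℂ →ₗ[ℂ] Matrix b b ℂ) : Matrix (a × b) (a × b) ℂ :=
  Matrix.of fun p q => E (Matrix.single p.1 q.1 1) p.2 q.2

/-- A quantum channel: completely positive (PSD Choi matrix) trace-preserving linear map. -/
def IsChannel {a b : Type*} [Fintype a] [DecidableEq a] [Fintype b] [DecidableEq b]
    (E : Matrix a a ℂ →ₗ[ℂ] Matrix b b ℂ) : Prop :=
  (choiMatrix E).PosSemidef ∧ ∀ ρ, (E ρ).trace = ρ.trace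

/-- The trace norm `‖M‖₁ = Tr √(M†M)`. -/
def traceNorm {d : Type*} [Fintype d] [DecidableEq d] (M : Matrix d d ℂ) : ℝ :=
  let hA := (Matrix.posSemidef_conjTranspose_mul_self M).1
  (((hA.eigenvectorUnitary : Matrix d d ℂ) *
      Matrix.diagonal (((↑) : ℝ → ℂ) ∘ Real.sqrt ∘ hA.eigenvalues) *
      (star (hA.eigenvectorUnitary : Matrix d d ℂ))).trace).re

/-- The trace distance `D(ρ,σ) = ½‖ρ−σ‖₁`. -/
def traceDist {d : Type*} [Fintype d] [DecidableEq d] (ρ σ : Matrix d d ℂ) : ℝ :=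
  traceNorm (ρ - σ) / 2

/-- The coherence rank of a vector: the number of nonzero coordinates. -/
def cohRank {d : Type*} [Fintype d] (ψ : d → ℂ) : ℕ :=
  (Finset.univ.filter fun x => ψ x ≠ 0).card

/-- The Hadamard gate. -/
def Hmat : Matrix (Fin 2) (Fin 2) ℂ :=
  Matrix.of fun a b => (((Real.sqrt 2)⁻¹ : ℝ) : ℂ) * (if a = 1 ∧ b = 1 then -1 else 1)

/-- `H^{⊗n}`, the n-fold Kronecker power of the Hadamard gate. -/
def Hpow (n : ℕ) : Matrix (Fin n → Fin 2) (Fin n → Fin 2) ℂ :=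
  Matrix.of fun i j => ∏ q, Hmat (i q) (j q)

/-- A generalized controlled-Hadamard on qubits indexed by `I`: for some target qubit `t`
and set `S` of configurations of the other qubits, apply `H` on qubit `t` controlled on the
other qubits being in `S`. -/
def IsCtrlHadamard {I : Type*} [Fintype I] [DecidableEq I]
    (V : Matrix (I → Fin 2) (I → Fin 2) ℂ) : Prop :=
  ∃ (t : I) (S : Finset ({i : I // i ≠ t} → Fin 2)),
    V = Matrix.of fun a b =>
      if (fun i : {i : I // i ≠ t} => b i.1) ∈ S then
        (if ∀ i, i ≠ t → a i = b i then Hmat (a t) (b t) else 0)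
      else (if a = b then (1 : ℂ) else 0)

/-- The alternating product `U_k * V_k * ⋯ * U_1 * V_1 * U_0`. -/
def altProd {X : Type*} [Monoid X] : (k : ℕ) → (Fin (k + 1) → X) → (Fin k → X) → X
  | 0, Us, _ => Us 0
  | (k + 1), Us, Vs =>
      Us (Fin.last (k + 1)) * Vs (Fin.last k) *
        altProd k (fun i => Us i.castSucc) (fun i => Vs i.castSucc)

lemma vecMulVec_psd {n : Type*} [Fintype n] (ψ : n → ℂ) :
    (Matrix.vecMulVec ψ (star ψ)).PosSemidef := by
  rw [Matrix.vecMulVec_eq Unit, ← Matrix.conjTranspose_replicateCol]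
  exact Matrix.posSemidef_self_mul_conjTranspose _

lemma sum_mulVec_conj {n m : Type*} [Fintype n] [Fintype m] [DecidableEq m]
    (V : Matrix n m ℂ) (hV : Vᴴ * V = 1) (ψ φ : m → ℂ) :
    ∑ i, V.mulVec ψ i * (starRingEnd ℂ) (V.mulVec φ i) = ∑ a, ψ a * (starRingEnd ℂ) (φ a) := by
  have h1 : ∀ a b, ∑ i, V i a * (starRingEnd ℂ) (V i b) = if b = a then 1 else 0 := by
    intro a b
    have := congrFun (congrFun hV b) a
    simpa [Matrix.mul_apply, Matrix.conjTranspose_apply, Matrix.one_apply, mul_comm] using this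
  calc ∑ i, V.mulVec ψ i * (starRingEnd ℂ) (V.mulVec φ i)
      = ∑ i, ∑ a, ∑ b, (V i a * (starRingEnd ℂ) (V i b)) * (ψ a * (starRingEnd ℂ) (φ b)) := by
        refine Finset.sum_congr rfl fun i _ => ?_
        simp only [Matrix.mulVec, dotProduct, map_sum, Finset.sum_mul_sum]
        exact Finset.sum_congr rfl fun a _ => Finset.sum_congr rfl fun b _ => by rw [_root_.map_mul]; ring
    _ = ∑ a, ∑ b, (∑ i, V i a * (starRingEnd ℂ) (V i b)) * (ψ a * (starRingEnd ℂ) (φ b)) := by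
        rw [Finset.sum_comm]
        refine Finset.sum_congr rfl fun a _ => ?_
        rw [Finset.sum_comm]
        refine Finset.sum_congr rfl fun b _ => ?_
        rw [Finset.sum_mul]
    _ = ∑ a, ψ a * (starRingEnd ℂ) (φ a) := by
        simp [h1]

lemma kron_vecMulVec {a b : Type*} [Fintype a] [Fintype b] (ψ : a → ℂ) (γ : b → ℂ) :
    (Matrix.vecMulVec ψ (star ψ)) ⊗ₖ (Matrix.vecMulVec γ (star γ)) =
      Matrix.vecMulVec (fun p : a × b => ψ p.1 * γ p.2)
        (star fun p : a × b => ψ p.1 * γ p.2) := by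
  ext ⟨i, j⟩ ⟨i', j'⟩
  simp only [Matrix.kroneckerMap_apply, Matrix.vecMulVec_apply, Pi.star_apply,
    Complex.star_def, _root_.map_mul]
  ring

lemma conj_vecMulVec {n : Type*} [Fintype n] (U : Matrix n n ℂ) (x : n → ℂ) :
    U * Matrix.vecMulVec x (star x) * Uᴴ =
      Matrix.vecMulVec (U.mulVec x) (star (U.mulVec x)) := by
  ext p q
  simp only [Matrix.mul_apply, Matrix.vecMulVec_apply, Pi.star_apply, Complex.star_def,
    Matrix.conjTranspose_apply, Matrix.mulVec, dotProduct, map_sum, Finset.sum_mul,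
    Finset.mul_sum]
  refine Finset.sum_congr rfl fun s _ => Finset.sum_congr rfl fun r _ => ?_
  rw [_root_.map_mul]; ring

lemma purity {I J : Type*} [Fintype I] [Fintype J]
    (w : I × J → ℂ) (v : I → ℂ) (i₀ : I) (hv : v i₀ ≠ 0)
    (h : ∀ i i', ∑ j, w (i, j) * (starRingEnd ℂ) (w (i', j)) = v i * (starRingEnd ℂ) (v i')) :
    ∃ c : J → ℂ, (∑ j, ‖c j‖ ^ 2 = 1) ∧ ∀ i j, w (i, j) = v i * c j := by
  have hwnorm : ∑ j, ‖w (i₀, j)‖ ^ 2 = ‖v i₀‖ ^ 2 := by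
    have h0 := h i₀ i₀
    have hz : ∀ z : ℂ, z * (starRingEnd ℂ) z = ((‖z‖ ^ 2 : ℝ) : ℂ) := by
      intro z
      rw [Complex.mul_conj]
      norm_cast
      rw [Complex.normSq_eq_norm_sq]
    simp only [hz] at h0
    rw [← Complex.ofReal_sum] at h0
    exact_mod_cast h0
  refine ⟨fun j => w (i₀, j) / v i₀, ?_, ?_⟩
  · have hvn : ‖v i₀‖ ≠ 0 := norm_ne_zero_iff.mpr hv
    simp only [norm_div, div_pow, ← Finset.sum_div, hwnorm]
    rw [div_self (by positivity)]
  · intro i j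
    have hv' : (starRingEnd ℂ) (v i₀) ≠ 0 := by
      simpa using hv
    have key : ∑ j, Complex.normSq (w (i, j) - (v i / v i₀) * w (i₀, j)) = 0 := by
      have expand : (∑ j, (Complex.normSq (w (i, j) - (v i / v i₀) * w (i₀, j)) : ℂ)) = 0 := by
        have hterm : ∀ j, (Complex.normSq (w (i, j) - (v i / v i₀) * w (i₀, j)) : ℂ)
            = w (i, j) * (starRingEnd ℂ) (w (i, j))
              - (starRingEnd ℂ) (v i / v i₀) * (w (i, j) * (starRingEnd ℂ) (w (i₀, j)))
              - (v i / v i₀) * (w (i₀, j) * (starRingEnd ℂ) (w (i, j)))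
              + (v i / v i₀) * (starRingEnd ℂ) (v i / v i₀)
                  * (w (i₀, j) * (starRingEnd ℂ) (w (i₀, j))) := by
          intro j
          rw [← Complex.mul_conj]
          simp only [map_sub, _root_.map_mul]
          ring
        rw [Finset.sum_congr rfl fun j _ => hterm j]
        simp only [Finset.sum_add_distrib, Finset.sum_sub_distrib, ← Finset.mul_sum, h]
        field_simp
        ring
      have := congrArg Complex.re expand
      simpa using this
    have each := (Finset.sum_eq_zero_iff_of_nonneg
      (fun j _ => Complex.normSq_nonneg _)).mp key j (Finset.mem_univ j)
    have hz : w (i, j) - (v i / v i₀) * w (i₀, j) = 0 := Complex.normSq_eq_zero.mp each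
    field_simp at hz ⊢
    linear_combination hz

lemma sum_mul_conj_eq_norm {n : Type*} [Fintype n] (f : n → ℂ) :
    ∑ a, f a * (starRingEnd ℂ) (f a) = ((∑ a, ‖f a‖ ^ 2 : ℝ) : ℂ) := by
  rw [Complex.ofReal_sum]
  refine Finset.sum_congr rfl fun a _ => ?_
  rw [Complex.mul_conj]
  norm_cast
  rw [Complex.normSq_eq_norm_sq]

lemma unitary_col_orth {n m : Type*} [Fintype n] [Fintype m] [DecidableEq m]
    (V : Matrix n m ℂ) (hV : Vᴴ * V = 1) (a b : m) :
    ∑ i, V i a * (starRingEnd ℂ) (V i b) = if b = a then 1 else 0 := by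
  have := congrFun (congrFun hV b) a
  simpa [Matrix.mul_apply, Matrix.conjTranspose_apply, Matrix.one_apply, mul_comm] using this


lemma main_aux (d₁ d₂ : ℕ) (hpos : 0 < d₁)
    (U : Matrix (Fin d₁ × Fin d₂) (Fin d₁ × Fin d₂) ℂ)
    (V : Matrix (Fin d₁) (Fin d₁) ℂ) (hVu : Vᴴ * V = 1)
    (γ : Fin d₂ → ℂ)
    (himpl : ∀ ρ, IsState ρ →
      ptrace2 (U * (ρ ⊗ₖ Matrix.vecMulVec γ (star γ)) * Uᴴ) = V * ρ * Vᴴ) :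
    ∃ γ' : Fin d₂ → ℂ, (∑ j, ‖γ' j‖ ^ 2 = 1) ∧
      ∀ (ψ : Fin d₁ → ℂ) (p : Fin d₁ × Fin d₂),
        U.mulVec (fun q => ψ q.1 * γ q.2) p = V.mulVec ψ p.1 * γ' p.2 := by
  -- Claim C : for unit ψ
  have claimC : ∀ ψ : Fin d₁ → ℂ, (∑ a, ‖ψ a‖ ^ 2 = 1) →
      ∃ c : Fin d₂ → ℂ, (∑ j, ‖c j‖ ^ 2 = 1) ∧
        ∀ p : Fin d₁ × Fin d₂, U.mulVec (fun q => ψ q.1 * γ q.2) p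
          = V.mulVec ψ p.1 * c p.2 := by
    intro ψ hψ
    have hstate : IsState (Matrix.vecMulVec ψ (star ψ)) := by
      constructor
      · exact vecMulVec_psd ψ
      · rw [Matrix.trace]
        simp only [Matrix.diag_apply, Matrix.vecMulVec_apply, Pi.star_apply, Complex.star_def]
        rw [sum_mul_conj_eq_norm, hψ]
        norm_num
    have heq := himpl _ hstate
    rw [kron_vecMulVec, conj_vecMulVec, conj_vecMulVec] at heq
    have hentries : ∀ i i',
        ∑ j, U.mulVec (fun q => ψ q.1 * γ q.2) (i, j)
          * (starRingEnd ℂ) (U.mulVec (fun q => ψ q.1 * γ q.2) (i', j))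
        = V.mulVec ψ i * (starRingEnd ℂ) (V.mulVec ψ i') := by
      intro i i'
      have := congrFun (congrFun heq i) i'
      simpa [ptrace2, Matrix.vecMulVec_apply, Pi.star_apply, Complex.star_def] using this
    have hex : ∃ i₀, V.mulVec ψ i₀ ≠ 0 := by
      by_contra hcon
      push_neg at hcon
      have h1 : (∑ i, V.mulVec ψ i * (starRingEnd ℂ) (V.mulVec ψ i)) = 0 := by
        simp [hcon]
      rw [sum_mulVec_conj V hVu, sum_mul_conj_eq_norm, hψ] at h1
      simp at h1
    obtain ⟨i₀, hi₀⟩ := hex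
    obtain ⟨c, hc1, hc2⟩ := purity _ _ i₀ hi₀ hentries
    exact ⟨c, hc1, fun p => hc2 p.1 p.2⟩
  -- Claim C' : for nonzero ψ
  have claimC' : ∀ ψ : Fin d₁ → ℂ, ψ ≠ 0 →
      ∃ c : Fin d₂ → ℂ, (∑ j, ‖c j‖ ^ 2 = 1) ∧
        ∀ p : Fin d₁ × Fin d₂, U.mulVec (fun q => ψ q.1 * γ q.2) p
          = V.mulVec ψ p.1 * c p.2 := by
    intro ψ hψ0
    have hsumpos : 0 < ∑ a, ‖ψ a‖ ^ 2 := by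
      obtain ⟨a, ha⟩ := Function.ne_iff.mp hψ0
      exact Finset.sum_pos' (fun b _ => by positivity)
        ⟨a, Finset.mem_univ a, by simpa using pow_pos (norm_pos_iff.mpr ha) 2⟩
    obtain ⟨n, hn⟩ : ∃ n : ℝ, n = Real.sqrt (∑ a, ‖ψ a‖ ^ 2) := ⟨_, rfl⟩
    have hnpos : 0 < n := hn ▸ Real.sqrt_pos.mpr hsumpos
    have hnsq : n ^ 2 = ∑ a, ‖ψ a‖ ^ 2 := hn ▸ Real.sq_sqrt hsumpos.le
    have hn0 : (n : ℂ) ≠ 0 := by exact_mod_cast ne_of_gt hnpos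
    have hφ : ∑ a, ‖((n : ℂ))⁻¹ • ψ a‖ ^ 2 = 1 := by
      simp only [smul_eq_mul, norm_mul, mul_pow, ← Finset.mul_sum,
        norm_inv, Complex.norm_real, Real.norm_eq_abs, abs_of_pos hnpos, inv_pow]
      rw [← hnsq, inv_mul_cancel₀ (pow_ne_zero _ (ne_of_gt hnpos))]
    obtain ⟨c, hc1, hc2⟩ := claimC (((n : ℂ))⁻¹ • ψ) (by simpa using hφ)
    refine ⟨c, hc1, fun p => ?_⟩
    have hfun : (fun q : Fin d₁ × Fin d₂ => (((n : ℂ))⁻¹ • ψ) q.1 * γ q.2)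
        = ((n : ℂ))⁻¹ • fun q : Fin d₁ × Fin d₂ => ψ q.1 * γ q.2 := by
      funext q; simp [mul_assoc]
    have h1 := hc2 p
    rw [hfun, Matrix.mulVec_smul, Matrix.mulVec_smul] at h1
    simp only [Pi.smul_apply, smul_eq_mul] at h1
    have h2 : ((n:ℂ))⁻¹ * ((U *ᵥ fun q => ψ q.1 * γ q.2) p)
        = ((n:ℂ))⁻¹ * ((V *ᵥ ψ) p.1 * c p.2) := by
      rw [h1]; ring
    exact mul_left_cancel₀ (inv_ne_zero hn0) h2
  -- the base vector
  obtain ⟨z, hzdef⟩ : ∃ z : Fin d₁, z = ⟨0, hpos⟩ := ⟨_, rfl⟩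
  have he₀ : ∑ a, ‖(Pi.single z 1 : Fin d₁ → ℂ) a‖ ^ 2 = 1 := by
    rw [Finset.sum_eq_single z]
    · simp
    · intro b _ hb; simp [Pi.single_apply, hb]
    · intro hb; exact absurd (Finset.mem_univ z) hb
  have he₀ne : (Pi.single z 1 : Fin d₁ → ℂ) ≠ 0 := by
    intro h
    have := congrFun h z
    simp at this
  obtain ⟨γ', hγ'1, hγ'2⟩ := claimC (Pi.single z 1) he₀
  refine ⟨γ', hγ'1, ?_⟩
  intro ψ
  by_cases hψ0 : ψ = 0
  · intro p
    subst hψ0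
    have : (fun q : Fin d₁ × Fin d₂ => (0 : Fin d₁ → ℂ) q.1 * γ q.2) = 0 := by
      funext q; simp
    rw [this]
    simp [Matrix.mulVec_zero]
  by_cases hdep : ∃ lam : ℂ, ψ = lam • (Pi.single z 1 : Fin d₁ → ℂ)
  · obtain ⟨lam, rfl⟩ := hdep
    intro p
    have hfun : (fun q : Fin d₁ × Fin d₂ => (lam • (Pi.single z 1 : Fin d₁ → ℂ)) q.1 * γ q.2)
        = lam • fun q : Fin d₁ × Fin d₂ => (Pi.single z 1 : Fin d₁ → ℂ) q.1 * γ q.2 := by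
      funext q; simp [mul_assoc]
    rw [hfun, Matrix.mulVec_smul, Matrix.mulVec_smul]
    simp only [Pi.smul_apply, smul_eq_mul]
    rw [hγ'2 p]
    ring
  · -- independent case
    obtain ⟨cψ, _, hcψ⟩ := claimC' ψ hψ0
    have hs0 : ψ + Pi.single z 1 ≠ 0 := by
      intro h
      apply hdep
      refine ⟨-1, ?_⟩
      funext a
      have := congrFun h a
      simp only [Pi.add_apply, Pi.zero_apply] at this
      simp only [Pi.smul_apply, smul_eq_mul, neg_one_mul]
      linear_combination this
    obtain ⟨cs, _, hcs⟩ := claimC' (ψ + Pi.single z 1) hs0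
    have hind : ∀ α β : ℂ, (∀ i, α * V.mulVec ψ i + β * V.mulVec (Pi.single z 1) i = 0) →
        α = 0 ∧ β = 0 := by
      intro α β hab
      have hVsum : V.mulVec (α • ψ + β • (Pi.single z 1 : Fin d₁ → ℂ)) = 0 := by
        funext i
        rw [Matrix.mulVec_add, Matrix.mulVec_smul, Matrix.mulVec_smul]
        simpa using hab i
      have hzero : α • ψ + β • (Pi.single z 1 : Fin d₁ → ℂ) = 0 := by
        have h5 : Vᴴ.mulVec (V.mulVec (α • ψ + β • (Pi.single z 1 : Fin d₁ → ℂ))) = 0 := by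
          rw [hVsum, Matrix.mulVec_zero]
        rwa [Matrix.mulVec_mulVec, hVu, Matrix.one_mulVec] at h5
      have hα : α = 0 := by
        by_contra hα0
        apply hdep
        refine ⟨-(α⁻¹ * β), ?_⟩
        funext a
        have := congrFun hzero a
        simp only [Pi.add_apply, Pi.smul_apply, smul_eq_mul, Pi.zero_apply] at this
        simp only [Pi.smul_apply, smul_eq_mul]
        field_simp
        linear_combination this
      refine ⟨hα, ?_⟩
      have := congrFun hzero z
      simp only [hα, Pi.add_apply, Pi.smul_apply, smul_eq_mul, zero_mul, Pi.zero_apply,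
        zero_add, Pi.single_eq_same, mul_one] at this
      exact this
    have hkey : ∀ j, cψ j = γ' j := by
      intro j
      have hj : ∀ i, (cs j - cψ j) * V.mulVec ψ i + (cs j - γ' j) * V.mulVec (Pi.single z 1) i
          = 0 := by
        intro i
        have h1 := hcs (i, j)
        have h2 := hcψ (i, j)
        have h3 := hγ'2 (i, j)
        have hfun : (fun q : Fin d₁ × Fin d₂ => (ψ + Pi.single z 1 : Fin d₁ → ℂ) q.1 * γ q.2)
            = (fun q : Fin d₁ × Fin d₂ => ψ q.1 * γ q.2)
              + fun q : Fin d₁ × Fin d₂ => (Pi.single z 1 : Fin d₁ → ℂ) q.1 * γ q.2 := by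
          funext q; simp [add_mul]
        rw [hfun, Matrix.mulVec_add, Matrix.mulVec_add] at h1
        simp only [Pi.add_apply] at h1
        rw [h2, h3] at h1
        linear_combination -h1
      obtain ⟨hA, hB⟩ := hind _ _ hj
      have e1 : cs j = cψ j := by linear_combination hA
      have e2 : cs j = γ' j := by linear_combination hB
      rw [← e1, e2]
    intro p
    rw [hcψ p, hkey p.2]

/-- If `Tr₂(U (ρ ⊗ |γ⟩⟨γ|) U†) = V ρ V†` for all states `ρ`, with `U`, `V`
unitary, then the other marginal `Tr₁(U (ρ ⊗ |γ⟩⟨γ|) U†)` is a fixed pure state `|γ'⟩⟨γ'|`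
independent of `ρ`. -/
theorem ancilla_independent (d₁ d₂ : ℕ)
    (U : Matrix (Fin d₁ × Fin d₂) (Fin d₁ × Fin d₂) ℂ)
    (hU : U ∈ Matrix.unitaryGroup (Fin d₁ × Fin d₂) ℂ)
    (V : Matrix (Fin d₁) (Fin d₁) ℂ) (hV : V ∈ Matrix.unitaryGroup (Fin d₁) ℂ)
    (γ : Fin d₂ → ℂ) (hγ : ∑ j, ‖γ j‖ ^ 2 = 1)
    (himpl : ∀ ρ, IsState ρ →
      ptrace2 (U * (ρ ⊗ₖ Matrix.vecMulVec γ (star γ)) * Uᴴ) = V * ρ * Vᴴ) :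
    ∃ γ' : Fin d₂ → ℂ, (∑ j, ‖γ' j‖ ^ 2 = 1) ∧
      ∀ ρ, IsState ρ →
        ptrace1 (U * (ρ ⊗ₖ Matrix.vecMulVec γ (star γ)) * Uᴴ) =
          Matrix.vecMulVec γ' (star γ') := by
  rcases Nat.eq_zero_or_pos d₁ with h0 | hpos
  · refine ⟨γ, hγ, ?_⟩
    intro ρ hρ
    exfalso
    have ht := hρ.2
    subst h0
    rw [Matrix.trace] at ht
    simp at ht
  · have hVu : Vᴴ * V = 1 := by
      rw [← Matrix.star_eq_conjTranspose]; exact hV.1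
    obtain ⟨γ', hγ'1, hkeyall⟩ := main_aux d₁ d₂ hpos U V hVu γ himpl
    refine ⟨γ', hγ'1, ?_⟩
    intro ρ hρ
    have hkey : ∀ (p : Fin d₁ × Fin d₂) (a : Fin d₁),
        ∑ b, U p (a, b) * γ b = V p.1 a * γ' p.2 := by
      intro p a
      have h := hkeyall (Pi.single a 1) p
      have hL : (U *ᵥ fun q : Fin d₁ × Fin d₂ => (Pi.single a 1 : Fin d₁ → ℂ) q.1 * γ q.2) p
          = ∑ b, U p (a, b) * γ b := by
        rw [Matrix.mulVec, dotProduct, Fintype.sum_prod_type]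
        rw [Finset.sum_eq_single a]
        · refine Finset.sum_congr rfl fun b _ => by simp
        · intro a' _ ha'; simp [Pi.single_apply, ha']
        · intro ha; exact absurd (Finset.mem_univ a) ha
      have hR : (V *ᵥ (Pi.single a 1 : Fin d₁ → ℂ)) p.1 = V p.1 a := by
        rw [Matrix.mulVec, dotProduct]
        rw [Finset.sum_eq_single a]
        · simp
        · intro b _ hb; simp [Pi.single_apply, hb]
        · intro ha; exact absurd (Finset.mem_univ a) ha
      rw [hL, hR] at h
      exact h
    have ht : ∑ a, ρ a a = 1 := by
      simpa [Matrix.trace, Matrix.diag] using hρ.2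
    have hUA : ∀ (p : Fin d₁ × Fin d₂) (a' : Fin d₁) (b' : Fin d₂),
        (U * (ρ ⊗ₖ Matrix.vecMulVec γ (star γ))) p (a', b')
          = (∑ a, ρ a a' * (V p.1 a * γ' p.2)) * (starRingEnd ℂ) (γ b') := by
      intro p a' b'
      rw [Matrix.mul_apply, Fintype.sum_prod_type]
      have hinner : ∀ a : Fin d₁,
          (∑ b, U p (a, b) * (ρ ⊗ₖ Matrix.vecMulVec γ (star γ)) (a, b) (a', b'))
            = ρ a a' * (V p.1 a * γ' p.2) * (starRingEnd ℂ) (γ b') := by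
        intro a
        have : (∑ b, U p (a, b) * (ρ ⊗ₖ Matrix.vecMulVec γ (star γ)) (a, b) (a', b'))
            = (ρ a a' * (starRingEnd ℂ) (γ b')) * ∑ b, U p (a, b) * γ b := by
          rw [Finset.mul_sum]
          refine Finset.sum_congr rfl fun b _ => ?_
          simp only [Matrix.kroneckerMap_apply, Matrix.vecMulVec_apply, Pi.star_apply,
            Complex.star_def]
          ring
        rw [this, hkey p a]
        ring
      rw [Finset.sum_congr rfl fun a _ => hinner a, ← Finset.sum_mul]
    have hM : ∀ p q : Fin d₁ × Fin d₂,
        (U * (ρ ⊗ₖ Matrix.vecMulVec γ (star γ)) * Uᴴ) p q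
          = ∑ a', (∑ a, ρ a a' * (V p.1 a * γ' p.2))
              * (starRingEnd ℂ) (V q.1 a' * γ' q.2) := by
      intro p q
      rw [Matrix.mul_apply, Fintype.sum_prod_type]
      refine Finset.sum_congr rfl fun a' _ => ?_
      have step1 : (∑ b', (U * (ρ ⊗ₖ Matrix.vecMulVec γ (star γ))) p (a', b') * Uᴴ (a', b') q)
          = (∑ a, ρ a a' * (V p.1 a * γ' p.2))
              * ∑ b', (starRingEnd ℂ) (U q (a', b') * γ b') := by
        rw [Finset.mul_sum]
        refine Finset.sum_congr rfl fun b' _ => ?_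
        rw [hUA, Matrix.conjTranspose_apply, _root_.map_mul, Complex.star_def]
        ring
      rw [step1, ← map_sum, hkey q a']
    ext j j'
    have hgoal : ptrace1 (U * (ρ ⊗ₖ Matrix.vecMulVec γ (star γ)) * Uᴴ) j j'
        = ∑ i, (U * (ρ ⊗ₖ Matrix.vecMulVec γ (star γ)) * Uᴴ) (i, j) (i, j') := rfl
    rw [hgoal]
    have hRHS : Matrix.vecMulVec γ' (star γ') j j' = γ' j * (starRingEnd ℂ) (γ' j') := rfl
    rw [hRHS]
    calc ∑ i, (U * (ρ ⊗ₖ Matrix.vecMulVec γ (star γ)) * Uᴴ) (i, j) (i, j')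
        = ∑ i, ∑ a', ∑ a, (ρ a a' * (γ' j * (starRingEnd ℂ) (γ' j')))
            * (V i a * (starRingEnd ℂ) (V i a')) := by
          refine Finset.sum_congr rfl fun i _ => ?_
          rw [hM (i, j) (i, j')]
          refine Finset.sum_congr rfl fun a' _ => ?_
          rw [_root_.map_mul, Finset.sum_mul]
          refine Finset.sum_congr rfl fun a _ => by ring
      _ = ∑ a', ∑ a, (ρ a a' * (γ' j * (starRingEnd ℂ) (γ' j')))
            * ∑ i, V i a * (starRingEnd ℂ) (V i a') := by
          rw [Finset.sum_comm]
          refine Finset.sum_congr rfl fun a' _ => ?_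
          rw [Finset.sum_comm]
          refine Finset.sum_congr rfl fun a _ => ?_
          rw [Finset.mul_sum]
      _ = ∑ a, ρ a a * (γ' j * (starRingEnd ℂ) (γ' j')) := by
          rw [Finset.sum_comm]
          refine Finset.sum_congr rfl fun a _ => ?_
          rw [Finset.sum_congr rfl fun a' _ => by
            rw [unitary_col_orth V hVu a a']]
          simp
      _ = γ' j * (starRingEnd ℂ) (γ' j') := by
          rw [← Finset.sum_mul, ht, one_mul]
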